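/- arXiv:2510.13579 — 3 statements merged into one kernel-verified Lean document; each statement's English description precedes it below -/
import Mathlib

section
/- Let N ≥ 1, k ≥ 1 and m ≥ 0 be natural numbers, and let p_0, …, p_m be pairwise distinct points of ℝ^N. Then the ordered configuration space Conf(k, ℝ^N \ {p_0, …, p_m}) is (N−2)-connected. -/
/-- The ordered configuration space of `k` points in `X`: the space of injective
maps `Fin k → X`, topologized as a subspace of the product space `X^k`. -/
abbrev Conf (k : ℕ) (X : Type*) [TopologicalSpace X] : Type _ :=
  {f : Fin k → X // Function.Injective f}

/-- A space `X` is `c`-connected (for an integer `c ≥ -1`) if it is nonempty and,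
for every natural number `i ≤ c`, every continuous map from the sphere `S^i`
(the unit sphere in `ℝ^{i+1}`) to `X` extends to a continuous map from the
closed unit disk `D^{i+1}` to `X`. -/
def IsCConnected (c : ℤ) (X : Type*) [TopologicalSpace X] : Prop :=
  Nonempty X ∧ ∀ i : ℕ, (i : ℤ) ≤ c →
    ∀ f : (Metric.sphere (0 : EuclideanSpace ℝ (Fin (i + 1))) 1) → X,
      Continuous f →
        ∃ g : (Metric.closedBall (0 : EuclideanSpace ℝ (Fin (i + 1))) 1) → X,
          Continuous g ∧
            ∀ x : Metric.sphere (0 : EuclideanSpace ℝ (Fin (i + 1))) 1,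
              g ⟨x.val, Metric.sphere_subset_closedBall x.property⟩ = f x

/-!
Configurations of `k` points of `V ∖ s` form the complement, in `V^k`, of finitely many affine
subspaces of codimension `dim V`: the diagonals `x a = x b` and the subspaces `x a = p`, `p ∈ s`.
A map from `S^i` into such a complement extends to the disk once `i + 2 ≤ dim V`. Extend it
arbitrarily (Tietze), approximate the extension by a `C¹` map `Q` and translate `Q` by a small
vector `v`: the translates `v` for which `Q + v` meets one of the subspaces form a finite union of
`C¹` images of spaces of dimension `< dim V^k`, which has empty interior by a Hausdorff dimension
count. A collar near the sphere interpolates linearly between the map and the translate.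
-/

open Set Metric Module
open scoped Manifold

def arrangementCompl {E ι : Type*} [AddCommGroup E] [Module ℝ E] (W : ι → Submodule ℝ E)
    (c : ι → E) : Set E :=
  {x | ∀ j, x - c j ∉ W j}

theorem dense_compl_iUnion_range_of_contDiff {E ι : Type*} [NormedAddCommGroup E]
    [NormedSpace ℝ E] [FiniteDimensional ℝ E] [Finite ι] {F : ι → Type*}
    [∀ j, NormedAddCommGroup (F j)] [∀ j, NormedSpace ℝ (F j)] [∀ j, FiniteDimensional ℝ (F j)]
    {f : ∀ j, F j → E}
    (hf : ∀ j, ContDiff ℝ 1 (f j)) (hF : ∀ j, finrank ℝ (F j) < finrank ℝ E) :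
    Dense (⋃ j, range (f j))ᶜ := by
  rcases isEmpty_or_nonempty ι with hι | ⟨⟨j₀⟩⟩
  · simp
  refine dense_compl_of_dimH_lt_finrank ?_
  rw [dimH_iUnion, iSup_lt_iff]
  have := hF j₀
  refine ⟨(finrank ℝ E - 1 : ℕ), by exact_mod_cast (by omega), fun j => ?_⟩
  exact (hf j).dimH_range_le.trans (Nat.cast_le.2 (by have := hF j; omega))

theorem exists_contDiff_dist_lt {X F : Type*} [NormedAddCommGroup X] [NormedSpace ℝ X]
    [FiniteDimensional ℝ X] [NormedAddCommGroup F] [NormedSpace ℝ F] {f : X → F}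
    (hf : Continuous f) {ε : ℝ} (hε : 0 < ε) :
    ∃ g : X → F, ContDiff ℝ 1 g ∧ ∀ x, dist (g x) (f x) < ε := by
  obtain ⟨g, hg⟩ := exists_contMDiffMap_forall_mem_convex_of_local_const (I := 𝓘(ℝ, X))
    (n := 1) (t := fun x => ball (f x) ε) (fun x => convex_ball _ _)
    fun x => ⟨f x, (hf.continuousAt.eventually (ball_mem_nhds _ hε)).mono fun y hy =>
      mem_ball_comm.1 hy⟩
  exact ⟨g, contMDiff_iff_contDiff.1 g.contMDiff, hg⟩

theorem exists_collar_extension {X F : Type*} [NormedAddCommGroup X] [NormedSpace ℝ X]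
    [NormedAddCommGroup F] [NormedSpace ℝ F] {U : Set F} {f g : X → F} (hf : Continuous f)
    (hg : Continuous g) (hgU : MapsTo g (closedBall 0 1) U) {δ : ℝ}
    (hfU : ∀ x ∈ sphere (0 : X) 1, ball (f x) δ ⊆ U)
    (hgf : ∀ x ∈ sphere (0 : X) 1, dist (g x) (f x) < δ) :
    ∃ h : X → F, Continuous h ∧ MapsTo h (closedBall 0 1) U ∧ EqOn h f (sphere 0 1) := by
  -- `ρ` is `x ↦ 2 • x` on the ball of radius `1 / 2` and the radial retraction onto the unit
  -- sphere outside it; `t` rises from `0` to `1` across the collar `1 / 2 ≤ ‖x‖ ≤ 1`.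
  set ρ : X → X := fun x => (max ‖x‖ (1 / 2))⁻¹ • x
  set t : X → ℝ := fun x => max (2 * ‖x‖ - 1) 0
  have hρ : Continuous ρ := by
    refine ((continuous_norm.max continuous_const).inv₀ fun x => ?_).smul continuous_id
    exact (lt_max_of_lt_right one_half_pos).ne'
  refine ⟨fun x => g (ρ x) + t x • (f (ρ x) - g (ρ x)), by fun_prop, fun x hx => ?_,
    fun x hx => ?_⟩
  · rw [mem_closedBall_zero_iff] at hx
    rcases le_or_gt ‖x‖ (1 / 2) with hx' | hx'
    · have hρx : ρ x = (2 : ℝ) • x := by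
        simp only [ρ]
        rw [max_eq_right hx']
        norm_num
      have htx : t x = 0 := max_eq_right (by linarith)
      simp only [htx, zero_smul, add_zero]
      refine hgU ?_
      rw [hρx, mem_closedBall_zero_iff, norm_smul, Real.norm_two]
      linarith
    · have hρx : ρ x ∈ sphere (0 : X) 1 := by
        rw [mem_sphere_zero_iff_norm, norm_smul, max_eq_left hx'.le, norm_inv, norm_norm,
          inv_mul_cancel₀ (by positivity)]
      have htx : t x ∈ Icc (0 : ℝ) 1 := ⟨le_max_right _ _, max_le (by linarith) zero_le_one⟩
      refine hfU _ hρx ((convex_ball _ _).add_smul_sub_mem (hgf _ hρx) ?_ htx)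
      exact mem_ball_self (dist_nonneg.trans_lt (hgf _ hρx))
  · have hx' : ‖x‖ = 1 := mem_sphere_zero_iff_norm.1 hx
    have hρx : ρ x = x := by simp only [ρ, hx']; norm_num
    have htx : t x = 1 := by simp only [t, hx']; norm_num
    simp [hρx, htx]

section Arrangement

variable {E : Type*} [NormedAddCommGroup E] [NormedSpace ℝ E] [FiniteDimensional ℝ E]
  {ι : Type*} [Finite ι] (W : ι → Submodule ℝ E) (c : ι → E)

theorem isOpen_arrangementCompl : IsOpen (arrangementCompl W c) := by
  simp only [arrangementCompl, ofPred_forall]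
  exact isOpen_iInter_of_finite fun j =>
    ((W j).closed_of_finiteDimensional.preimage (continuous_id.sub continuous_const)).isOpen_compl

theorem dense_arrangementCompl (hW : ∀ j, finrank ℝ (W j) < finrank ℝ E) :
    Dense (arrangementCompl W c) := by
  convert dense_compl_iUnion_range_of_contDiff (f := fun j (w : W j) => c j + w)
    (fun j => contDiff_const.add (W j).subtypeL.contDiff) hW using 1
  ext x
  simp only [arrangementCompl, mem_ofPred_eq, compl_iUnion, mem_iInter, mem_compl_iff, mem_range,
    not_exists, Subtype.forall]
  refine forall_congr' fun j => ⟨fun h w hw hx => h ?_, fun h hx => h _ hx (add_sub_cancel _ _)⟩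
  rwa [← hx, add_sub_cancel_left]

theorem dense_setOf_forall_add_mem_arrangementCompl {X : Type*} [NormedAddCommGroup X]
    [NormedSpace ℝ X] [FiniteDimensional ℝ X]
    (hW : ∀ j, finrank ℝ (W j) + finrank ℝ X < finrank ℝ E) {Q : X → E} (hQ : ContDiff ℝ 1 Q) :
    Dense {v | ∀ x, Q x + v ∈ arrangementCompl W c} := by
  convert dense_compl_iUnion_range_of_contDiff (f := fun j (z : W j × X) => c j + z.1 - Q z.2)
    (fun j => (contDiff_const.add ((W j).subtypeL.contDiff.comp contDiff_fst)).sub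
      (hQ.comp contDiff_snd)) (by simpa [finrank_prod] using hW) using 1
  ext v
  simp only [arrangementCompl, mem_ofPred_eq, compl_iUnion, mem_iInter, mem_compl_iff, mem_range,
    not_exists, Prod.forall, Subtype.forall]
  refine ⟨fun h j w hw x hv => h x j ?_, fun h x j hx => h j _ hx x (by abel)⟩
  rw [← hv]
  convert hw using 1
  abel

theorem exists_extension_mapsTo_arrangementCompl {X : Type*} [NormedAddCommGroup X]
    [NormedSpace ℝ X] [FiniteDimensional ℝ X]
    (hW : ∀ j, finrank ℝ (W j) + finrank ℝ X < finrank ℝ E) {f : X → E} (hf : Continuous f)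
    (hfU : MapsTo f (sphere 0 1) (arrangementCompl W c)) :
    ∃ g : X → E, Continuous g ∧ MapsTo g (closedBall 0 1) (arrangementCompl W c) ∧
      EqOn g f (sphere 0 1) := by
  obtain ⟨δ, hδ, hthick⟩ := ((isCompact_sphere (0 : X) 1).image hf).exists_thickening_subset_open
    (isOpen_arrangementCompl W c) hfU.image_subset
  obtain ⟨Q, hQ, hQf⟩ := exists_contDiff_dist_lt hf (half_pos hδ)
  obtain ⟨v, hvU, hv⟩ := (dense_setOf_forall_add_mem_arrangementCompl W c hW hQ).exists_mem_open
    isOpen_ball ⟨0, mem_ball_self (half_pos hδ)⟩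
  refine exists_collar_extension hf (hQ.continuous.add continuous_const) (fun x _ => hvU x)
    (fun x hx => (ball_subset_thickening (mem_image_of_mem f hx) δ).trans hthick) fun x _ => ?_
  calc dist (Q x + v) (f x) ≤ dist (Q x + v) (Q x) + dist (Q x) (f x) := dist_triangle _ _ _
    _ < δ / 2 + δ / 2 := by
      rw [dist_self_add_left]; exact add_lt_add (mem_ball_zero_iff.1 hv) (hQf x)
    _ = δ := add_halves δ

theorem isCConnected_arrangementCompl {n : ℤ} (hn : -1 ≤ n)
    (hW : ∀ j, (finrank ℝ (W j) : ℤ) + n + 2 ≤ finrank ℝ E) :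
    IsCConnected n (arrangementCompl W c) := by
  refine ⟨(dense_arrangementCompl W c fun j => by have := hW j; omega).nonempty.to_subtype,
    fun i hi f hf => ?_⟩
  obtain ⟨F, hF⟩ := ContinuousMap.exists_restrict_eq
    (isClosed_sphere (x := (0 : EuclideanSpace ℝ (Fin (i + 1)))) (ε := 1))
    ⟨fun x => (f x : E), by fun_prop⟩
  have hFf : ∀ x : sphere (0 : EuclideanSpace ℝ (Fin (i + 1))) 1, F x = f x := fun x =>
    DFunLike.congr_fun hF x
  obtain ⟨g, hg, hgU, hgF⟩ := exists_extension_mapsTo_arrangementCompl W c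
    (fun j => by have := hW j; rw [finrank_euclideanSpace_fin]; omega) F.continuous
    fun x hx => hFf ⟨x, hx⟩ ▸ (f ⟨x, hx⟩).2
  refine ⟨fun x => ⟨g x, hgU x.2⟩, by fun_prop, fun x => Subtype.ext ?_⟩
  exact (hgF x.2).trans (hFf x)

end Arrangement

theorem IsCConnected.of_homeomorph {X Y : Type*} [TopologicalSpace X] [TopologicalSpace Y]
    {n : ℤ} (e : X ≃ₜ Y) (h : IsCConnected n X) : IsCConnected n Y := by
  refine ⟨h.1.map e, fun i hi f hf => ?_⟩
  obtain ⟨g, hg, hgf⟩ := h.2 i hi (e.symm ∘ f) (by fun_prop)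
  exact ⟨e ∘ g, by fun_prop, fun x => by simp [hgf]⟩

section Conf

variable {V : Type*} [NormedAddCommGroup V] [NormedSpace ℝ V] (s : Set V) (k : ℕ)

def confSubspace : {q : Fin k × Fin k // q.1 ≠ q.2} ⊕ (Fin k × s) → Submodule ℝ (Fin k → V)
  | .inl q =>
    LinearMap.ker (LinearMap.proj (R := ℝ) (φ := fun _ => V) q.1.1 - LinearMap.proj q.1.2)
  | .inr q => LinearMap.ker (LinearMap.proj (R := ℝ) (φ := fun _ => V) q.1)

def confCenter : {q : Fin k × Fin k // q.1 ≠ q.2} ⊕ (Fin k × s) → (Fin k → V)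
  | .inl _ => 0
  | .inr q => fun _ => q.2

theorem mem_arrangementCompl_confSubspace_iff {F : Fin k → V} :
    F ∈ arrangementCompl (confSubspace s k) (confCenter s k) ↔
      Function.Injective F ∧ ∀ a, F a ∉ s := by
  simp only [arrangementCompl, confSubspace, confCenter, mem_ofPred_eq, Sum.forall,
    Subtype.forall, Prod.forall, LinearMap.mem_ker, LinearMap.sub_apply, LinearMap.coe_proj,
    Function.eval, Pi.sub_apply, sub_zero, sub_eq_zero, Function.injective_iff_pairwise_ne]
  exact and_congr Iff.rfl (forall_congr' fun a =>
    ⟨fun h ha => h _ ha rfl, fun h _ hx hax => h (hax ▸ hx)⟩)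

theorem finrank_confSubspace_add_finrank [FiniteDimensional ℝ V]
    (j : {q : Fin k × Fin k // q.1 ≠ q.2} ⊕ (Fin k × s)) :
    finrank ℝ (confSubspace s k j) + finrank ℝ V = finrank ℝ (Fin k → V) := by
  have hker (φ : (Fin k → V) →ₗ[ℝ] V) (hφ : Function.Surjective φ) :
      finrank ℝ (LinearMap.ker φ) + finrank ℝ V = finrank ℝ (Fin k → V) := by
    rw [← φ.finrank_range_add_finrank_ker, LinearMap.range_eq_top.2 hφ, finrank_top, add_comm]
  cases j with
  | inl q => exact hker _ fun v => ⟨Pi.single q.1.1 v, by simp [q.2.symm]⟩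
  | inr q => exact hker _ fun v => ⟨fun _ => v, rfl⟩

def confComplHomeomorph :
    Conf k ↥sᶜ ≃ₜ arrangementCompl (confSubspace s k) (confCenter s k) where
  toFun F := ⟨fun a => F.1 a, (mem_arrangementCompl_confSubspace_iff s k).2
    ⟨fun _ _ h => F.2 (Subtype.ext h), fun a => (F.1 a).2⟩⟩
  invFun F := ⟨fun a => ⟨F.1 a, ((mem_arrangementCompl_confSubspace_iff s k).1 F.2).2 a⟩,
    fun _ _ h => ((mem_arrangementCompl_confSubspace_iff s k).1 F.2).1 (congrArg Subtype.val h)⟩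
  left_inv _ := rfl
  right_inv _ := rfl
  continuous_toFun := (continuous_pi fun a =>
    continuous_subtype_val.comp ((continuous_apply a).comp continuous_subtype_val)).subtype_mk _
  continuous_invFun := (continuous_pi fun a =>
    ((continuous_apply a).comp continuous_subtype_val).subtype_mk _).subtype_mk _

theorem isCConnected_conf_compl [FiniteDimensional ℝ V] [Nontrivial V] {s : Set V}
    (hs : s.Finite) (k : ℕ) : IsCConnected ((finrank ℝ V : ℤ) - 2) (Conf k ↥sᶜ) := by
  have := hs.to_subtype
  have hV := finrank_pos (R := ℝ) (M := V)
  refine (isCConnected_arrangementCompl _ _ (by omega) fun j => ?_).of_homeomorph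
    (confComplHomeomorph s k).symm
  have := finrank_confSubspace_add_finrank s k j
  omega

end Conf

theorem conf_complement_points_isConnected_general
    (N k m : ℕ) (hN : 1 ≤ N)
    (p : Fin (m + 1) → (Fin N → ℝ)) :
    IsCConnected ((N : ℤ) - 2) (Conf k ↥((Set.range p)ᶜ)) := by
  have : Nonempty (Fin N) := ⟨⟨0, hN⟩⟩
  simpa using isCConnected_conf_compl (finite_range p) k

/-- The ordered configuration space of `k ≥ 1` points in `ℝ^N` (`N ≥ 1`) with
`m + 1` pairwise distinct points removed is `(N - 2)`-connected. -/
theorem conf_complement_points_isConnected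
    (N k m : ℕ) (hN : 1 ≤ N) (hk : 1 ≤ k)
    (p : Fin (m + 1) → (Fin N → ℝ)) (hp : Function.Injective p) :
    IsCConnected ((N : ℤ) - 2) (Conf k ↥((Set.range p)ᶜ)) :=
  conf_complement_points_isConnected_general N k m hN p
end

section
/- Let N ≥ 1, k ≥ 1 and m ≥ 0 be natural numbers. Let B_0, …, B_m be open cubes in ℝ^N with centers p_0, …, p_m whose closures are pairwise disjoint and contained in the open unit cube (0,1)^N. Then the ordered configuration space Conf(k, [0,1]^N \ (B_0 ∪ … ∪ B_m)) is homotopy equivalent to the ordered configuration space Conf(k, ℝ^N \ {p_0, …, p_m}); that is, there are continuous maps in both directions whose two composites are homotopic to the respective identity maps. -/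
/-- The open cube in `ℝ^N` with center `c` and radius `ε`. -/
def openCube (N : ℕ) (c : Fin N → ℝ) (ε : ℝ) : Set (Fin N → ℝ) :=
  {x | ∀ i, |x i - c i| < ε}

/-- The closed unit cube `[0,1]^N`. -/
def unitCube (N : ℕ) : Set (Fin N → ℝ) :=
  {x | ∀ i, x i ∈ Set.Icc (0 : ℝ) 1}

/-- The open unit cube `(0,1)^N`. -/
def openUnitCube (N : ℕ) : Set (Fin N → ℝ) :=
  {x | ∀ i, x i ∈ Set.Ioo (0 : ℝ) 1}

/-!
In the sup norm the cubes are balls, the unit cube being the closed ball of radius `1/2` about its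
centre `q`. Enlarge the holes slightly to disjoint balls of radii `R j`, all inside a ball of
radius `b < 1/2` about `q`. First blowing each puncture `p j` radially up to the sphere of radius
`ε j` (moving only points of its `R j`-ball), then compressing radially everything outside the
`b`-ball into the open `1/2`-ball (fixing the `b`-ball), gives an isotopy of `ℝ^N \ {p j}` which
starts at the identity, ends inside the cube with holes, and keeps the cube with holes invariant.
Applied pointwise to configurations it inverts the inclusion up to homotopy on both sides.
-/

open Set Metric Function Topology unitInterval ContinuousMap

namespace Conf

variable {X Y : Type*} [TopologicalSpace X] [TopologicalSpace Y] {k : ℕ}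

def map (f : C(X, Y)) (hf : Injective f) : C(Conf k X, Conf k Y) where
  toFun c := ⟨f ∘ c.1, hf.comp c.2⟩
  continuous_toFun := by
    refine Continuous.subtype_mk (continuous_pi fun i => ?_) _
    exact f.continuous.comp ((continuous_apply i).comp continuous_subtype_val)

theorem homotopic_map {f₀ f₁ : C(X, Y)} (h : f₀.HomotopicWith f₁ fun f => Injective f)
    (h₀ : Injective f₀) (h₁ : Injective f₁) :
    (map f₀ h₀ : C(Conf k X, Conf k Y)).Homotopic (map f₁ h₁) := by
  obtain ⟨F⟩ := h
  refine ⟨⟨⟨fun w => ⟨fun i => F (w.1, w.2.1 i), (F.prop w.1).comp w.2.2⟩, ?_⟩, ?_, ?_⟩⟩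
  · refine Continuous.subtype_mk (continuous_pi fun i => ?_) _
    exact F.continuous.comp (continuous_fst.prodMk
      ((continuous_apply i).comp (continuous_subtype_val.comp continuous_snd)))
  · intro c; ext i; simp [map]
  · intro c; ext i; simp [map]

variable {A Y : Set X}

theorem nonempty_homotopyEquiv_of_deformation (H : I → X → X)
    (hH : ContinuousOn (uncurry H) (univ ×ˢ Y)) (hinj : ∀ t, InjOn (H t) Y)
    (hY : ∀ t, MapsTo (H t) Y Y) (hA : ∀ t, MapsTo (H t) A A) (hAY : A ⊆ Y)
    (h₀ : ∀ x ∈ Y, H 0 x = x) (h₁ : MapsTo (H 1) Y A) :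
    Nonempty (Conf k A ≃ₕ Conf k Y) := by
  let ι : C(A, Y) := ContinuousMap.inclusion hAY
  let r : C(Y, A) := ⟨fun y => ⟨H 1 y, h₁ y.2⟩, (hH.comp_continuous
    (continuous_const.prodMk continuous_subtype_val) fun y => ⟨trivial, y.2⟩).subtype_mk _⟩
  let deform (S : Set X) (hSY : S ⊆ Y) (hS : ∀ t, MapsTo (H t) S S) (f : C(S, S))
      (hf : ∀ x, f x = H 1 x) : (ContinuousMap.id S).HomotopyWith f fun g => Injective g :=
    { toFun w := ⟨H w.1 w.2, hS w.1 w.2.2⟩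
      continuous_toFun := (hH.comp_continuous (continuous_fst.prodMk
        (continuous_subtype_val.comp continuous_snd)) fun w => ⟨trivial, hSY w.2.2⟩).subtype_mk _
      map_zero_left x := Subtype.ext (h₀ x (hSY x.2))
      map_one_left x := Subtype.ext (hf x).symm
      prop' t x y hxy := Subtype.ext (hinj t (hSY x.2) (hSY y.2) (congrArg Subtype.val hxy)) }
  have hι : Injective ι := inclusion_injective hAY
  have hr : Injective r := fun x y hxy =>
    Subtype.ext (hinj 1 x.2 y.2 (congrArg Subtype.val hxy))
  exact ⟨⟨map ι hι, map r hr,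
    (homotopic_map ⟨deform A hAY hA (r.comp ι) fun _ => rfl⟩ injective_id (hr.comp hι)).symm,
    (homotopic_map ⟨deform Y subset_rfl hY (ι.comp r) fun _ => rfl⟩ injective_id
      (hι.comp hr)).symm⟩⟩

end Conf

section Radial

variable {E : Type*} [NormedAddCommGroup E] [NormedSpace ℝ E]

noncomputable def radial (c : E) (g : ℝ → ℝ) (x : E) : E :=
  c + (g (dist x c) / dist x c) • (x - c)

@[simp]
lemma radial_self (c : E) (g : ℝ → ℝ) : radial c g c = c := by
  simp [radial]

lemma dist_radial {c x : E} {g : ℝ → ℝ} (hx : x ≠ c) (hg : 0 ≤ g (dist x c)) :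
    dist (radial c g x) c = g (dist x c) := by
  have hd : 0 < dist x c := dist_pos.2 hx
  rw [radial, dist_eq_norm, add_sub_cancel_left, norm_smul, Real.norm_eq_abs,
    abs_of_nonneg (div_nonneg hg hd.le), ← dist_eq_norm, div_mul_cancel₀ _ hd.ne']

lemma radial_eq_self {c x : E} {g : ℝ → ℝ} (h : g (dist x c) = dist x c) : radial c g x = x := by
  obtain rfl | hx := eq_or_ne x c
  · exact radial_self x g
  · rw [radial, h, div_self (dist_ne_zero.2 hx), one_smul, add_sub_cancel]

lemma injective_radial (c : E) {g : ℝ → ℝ} (hg : StrictMonoOn g (Ici 0)) (hg₀ : 0 ≤ g 0) :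
    Injective (radial c g) := by
  have hpos {x : E} (hx : x ≠ c) : 0 < g (dist x c) :=
    hg₀.trans_lt (hg self_mem_Ici dist_nonneg (dist_pos.2 hx))
  have hne {x : E} (hx : x ≠ c) : radial c g x ≠ c := fun h => by
    simpa [h, (hpos hx).ne] using dist_radial hx (hpos hx).le
  intro x y hxy
  obtain rfl | hx := eq_or_ne x c
  · by_contra hy
    exact hne (Ne.symm hy) (by rw [← hxy, radial_self])
  obtain rfl | hy := eq_or_ne y c
  · exact absurd (hxy.trans (radial_self _ _)) (hne hx)
  have hd : dist x c = dist y c := hg.injOn dist_nonneg dist_nonneg <| by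
    rw [← dist_radial hx (hpos hx).le, ← dist_radial hy (hpos hy).le, hxy]
  have hs : g (dist x c) / dist x c ≠ 0 := (div_pos (hpos hx) (dist_pos.2 hx)).ne'
  rw [radial, radial, ← hd] at hxy
  exact sub_left_injective (smul_right_injective E hs (add_left_cancel hxy))

noncomputable def radialIsotopy (c : E) (φ : ℝ → ℝ) (t : I) : E → E :=
  radial c fun r => (1 - t) * r + t * φ r

variable {c x : E} {φ : ℝ → ℝ} {t : I}

@[simp]
lemma radialIsotopy_zero : radialIsotopy c φ 0 x = x :=
  radial_eq_self (by simp)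

@[simp]
lemma radialIsotopy_center : radialIsotopy c φ t c = c :=
  radial_self c _

lemma radialIsotopy_eq_self (h : φ (dist x c) = dist x c) : radialIsotopy c φ t x = x :=
  radial_eq_self (by rw [h]; ring)

lemma dist_radialIsotopy (hx : x ≠ c) (hφ : 0 ≤ φ (dist x c)) :
    dist (radialIsotopy c φ t x) c = (1 - t) * dist x c + t * φ (dist x c) :=
  dist_radial hx (by nlinarith [t.2.1, t.2.2, dist_nonneg (x := x) (y := c)])

lemma injective_radialIsotopy (hφ : StrictMonoOn φ (Ici 0)) (hφ₀ : 0 ≤ φ 0) :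
    Injective (radialIsotopy c φ t) := by
  refine injective_radial c (fun a ha b hb hab => ?_) (by nlinarith [t.2.1, t.2.2])
  have hφab := hφ ha hb hab
  obtain ht | ht := t.2.1.eq_or_lt
  · simp [← ht, hab]
  · nlinarith [t.2.2]

lemma continuousAt_radialIsotopy (hx : x ≠ c) (hφ : ContinuousAt φ (dist x c)) :
    ContinuousAt (uncurry (radialIsotopy c φ)) (t, x) := by
  have hφd : ContinuousAt (fun z : I × E => φ (dist z.2 c)) (t, x) :=
    hφ.comp (f := fun z : I × E => dist z.2 c) (by fun_prop)
  unfold radialIsotopy radial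
  fun_prop (disch := exact dist_ne_zero.2 hx)

lemma continuousAt_radialIsotopy_center {b : ℝ} (hb : 0 < b) (hφ : ∀ r ∈ Icc 0 b, φ r = r) :
    ContinuousAt (uncurry (radialIsotopy c φ)) (t, c) := by
  refine continuousAt_snd.congr (Filter.eventuallyEq_of_mem
    ((isOpen_ball.preimage continuous_snd).mem_nhds (mem_ball_self hb)) fun z hz => ?_)
  exact (radialIsotopy_eq_self (hφ _ ⟨dist_nonneg, (mem_ball.1 hz).le⟩)).symm

end Radial

section Profiles

variable {ε R b ρ r : ℝ}

/-- The identity beyond `R`, and on `[0, R]` the line from `(0, ε)` to `(R, R)`. -/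
noncomputable def blowProfile (ε R r : ℝ) : ℝ :=
  max r (ε + (R - ε) / R * r)

section blow

variable (hε : 0 ≤ ε) (hεR : ε < R)
include hε hεR

lemma strictMono_blowProfile : StrictMono (blowProfile ε R) := by
  have hslope : 0 < (R - ε) / R := div_pos (by linarith) (by linarith)
  exact fun a a' h => max_lt_max h (by nlinarith)

lemma le_blowProfile_of_nonneg (hr : 0 ≤ r) : ε ≤ blowProfile ε R r :=
  le_max_of_le_right (le_add_of_nonneg_right (mul_nonneg (div_nonneg (by linarith)
    (by linarith)) hr))

lemma blowProfile_le (hr : r ≤ R) : blowProfile ε R r ≤ R := by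
  have hR : (R - ε) / R * R = R - ε := div_mul_cancel₀ _ (by linarith)
  have hslope : 0 ≤ (R - ε) / R := div_nonneg (by linarith) (by linarith)
  exact max_le hr (by nlinarith)

lemma blowProfile_eq_self (hr : R ≤ r) : blowProfile ε R r = r := by
  have hR : (R - ε) / R * R = R - ε := div_mul_cancel₀ _ (by linarith)
  have hslope : (R - ε) / R ≤ 1 := (div_le_one (by linarith)).2 (by linarith)
  refine max_eq_left ?_
  nlinarith

end blow

lemma le_blowProfile : r ≤ blowProfile ε R r :=
  le_max_left _ _

lemma continuous_blowProfile : Continuous (blowProfile ε R) := by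
  unfold blowProfile
  fun_prop

/-- The identity on `[0, b]`; beyond `b`, a hyperbola through `(b, b)` increasing to the
asymptote `ρ`. -/
noncomputable def compressProfile (b ρ r : ℝ) : ℝ :=
  min r (ρ - (ρ - b) * ρ / (ρ - b + r))

section compress

variable (hbρ : b < ρ)
include hbρ

lemma strictMonoOn_compressProfile (hρ : 0 < ρ) : StrictMonoOn (compressProfile b ρ) (Ici 0) :=
  fun a ha a' _ h => min_lt_min h (sub_lt_sub_left (div_lt_div_of_pos_left
    (mul_pos (by linarith) hρ) (by linarith [mem_Ici.1 ha]) (by linarith)) ρ)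

lemma compressProfile_nonneg (hρ : 0 < ρ) (hr : 0 ≤ r) : 0 ≤ compressProfile b ρ r := by
  have h₀ : compressProfile b ρ 0 = 0 := by
    simp [compressProfile, mul_div_cancel_left₀ _ (sub_ne_zero.2 hbρ.ne')]
  exact h₀ ▸ (strictMonoOn_compressProfile hbρ hρ).monotoneOn self_mem_Ici hr hr

lemma compressProfile_lt (hρ : 0 < ρ) (hr : 0 ≤ r) : compressProfile b ρ r < ρ :=
  (min_le_right _ _).trans_lt (sub_lt_self ρ (div_pos (mul_pos (by linarith) hρ) (by linarith)))

lemma compressProfile_eq_self (hr : r ∈ Icc 0 b) : compressProfile b ρ r = r := by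
  obtain ⟨hr0, hrb⟩ := hr
  refine min_eq_left (le_sub_comm.1 ((div_le_iff₀ (by linarith)).2 ?_))
  nlinarith

lemma continuousAt_compressProfile (hr : 0 ≤ r) : ContinuousAt (compressProfile b ρ) r := by
  have : ρ - b + r ≠ 0 := by linarith
  unfold compressProfile
  fun_prop (disch := assumption)

end compress

lemma compressProfile_le : compressProfile b ρ r ≤ r :=
  min_le_left _ _

end Profiles

lemma radialIsotopy_blowProfile_eq_self {E : Type*} [NormedAddCommGroup E] [NormedSpace ℝ E]
    {c x : E} {ε R : ℝ} {t : I} (hε : 0 ≤ ε) (hεR : ε < R) (hx : x ∉ closedBall c R) :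
    radialIsotopy c (blowProfile ε R) t x = x :=
  radialIsotopy_eq_self (blowProfile_eq_self hε hεR (not_le.1 (mt mem_closedBall.2 hx)).le)

lemma notMem_iUnion_ball_of_mem_closedBall {X ι : Type*} [PseudoMetricSpace X] {p : ι → X}
    {ε R : ι → ℝ} (hεR : ∀ i, ε i ≤ R i)
    (hR : Pairwise (Disjoint on fun i => closedBall (p i) (R i)))
    {x : X} {j : ι} (hx : x ∈ closedBall (p j) (R j)) (hεx : ε j ≤ dist x (p j)) :
    x ∉ ⋃ i, ball (p i) (ε i) := by
  simp only [mem_iUnion, not_exists]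
  intro i hi
  obtain rfl | hij := eq_or_ne i j
  · exact (mem_ball.1 hi).not_ge hεx
  · exact (hR hij).notMem_of_mem_left (ball_subset_closedBall.trans
      (closedBall_subset_closedBall (hεR i)) hi) hx

section BlowUp

variable {E : Type*} [NormedAddCommGroup E] [NormedSpace ℝ E] {ι : Type*} [Fintype ι]
  (p : ι → E) (ε R : ι → ℝ)

/-- When the balls `closedBall (p j) (R j)` are disjoint the summands have disjoint supports, so on
each of these balls this is the radial blow-up of `p j` to the sphere of radius `ε j`. -/
noncomputable def blowUp (t : I) (x : E) : E :=
  x + ∑ j, (radialIsotopy (p j) (blowProfile (ε j) (R j)) t x - x)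

variable {p ε R} {t : I} {x y : E} {j : ι}

@[simp]
lemma blowUp_zero : blowUp p ε R 0 x = x := by
  simp [blowUp]

lemma continuousAt_blowUp (hx : x ∉ range p) : ContinuousAt (uncurry (blowUp p ε R)) (t, x) := by
  have h (j : ι) : ContinuousAt (uncurry (radialIsotopy (p j) (blowProfile (ε j) (R j)))) (t, x) :=
    continuousAt_radialIsotopy (fun h => hx ⟨j, h.symm⟩) continuous_blowProfile.continuousAt
  unfold blowUp
  fun_prop

variable (hε : ∀ j, 0 ≤ ε j) (hεR : ∀ j, ε j < R j)
  (hR : Pairwise (Disjoint on fun j => closedBall (p j) (R j)))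
include hε hεR

lemma blowUp_eq_self (hx : ∀ j, x ∉ closedBall (p j) (R j)) : blowUp p ε R t x = x := by
  rw [blowUp, Finset.sum_eq_zero fun j _ => by
    rw [radialIsotopy_blowProfile_eq_self (hε j) (hεR j) (hx j), sub_self], add_zero]

include hR

lemma blowUp_eq_of_mem (hx : x ∈ closedBall (p j) (R j)) :
    blowUp p ε R t x = radialIsotopy (p j) (blowProfile (ε j) (R j)) t x := by
  rw [blowUp, Finset.sum_eq_single j (fun i _ hij => ?_) (by simp), add_sub_cancel]
  rw [radialIsotopy_blowProfile_eq_self (hε i) (hεR i) ((hR hij).symm.notMem_of_mem_left hx),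
    sub_self]

lemma blowUp_center : blowUp p ε R t (p j) = p j := by
  rw [blowUp_eq_of_mem hε hεR hR (mem_closedBall_self ((hε j).trans (hεR j).le)),
    radialIsotopy_center]

lemma blowUp_mem_closedBall (hx : x ∈ closedBall (p j) (R j)) :
    blowUp p ε R t x ∈ closedBall (p j) (R j) ∧ dist x (p j) ≤ dist (blowUp p ε R t x) (p j) := by
  obtain rfl | hxp := eq_or_ne x (p j)
  · simpa [blowUp_center hε hεR hR] using hx
  rw [blowUp_eq_of_mem hε hεR hR hx, mem_closedBall, dist_radialIsotopy hxp
    ((hε j).trans (le_blowProfile_of_nonneg (hε j) (hεR j) dist_nonneg))]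
  have h₁ : dist x (p j) ≤ blowProfile (ε j) (R j) (dist x (p j)) := le_blowProfile
  have h₂ := blowProfile_le (hε j) (hεR j) (mem_closedBall.1 hx)
  constructor <;> nlinarith [t.2.1, t.2.2]

lemma mem_closedBall_of_blowUp_mem (hx : blowUp p ε R t x ∈ closedBall (p j) (R j)) :
    x ∈ closedBall (p j) (R j) := by
  by_cases h : ∃ i, x ∈ closedBall (p i) (R i)
  · obtain ⟨i, hi⟩ := h
    obtain rfl | hij := eq_or_ne i j
    · exact hi
    · exact absurd hx ((hR hij).notMem_of_mem_left (blowUp_mem_closedBall hε hεR hR hi).1)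
  · rwa [blowUp_eq_self hε hεR (not_exists.1 h)] at hx

lemma injective_blowUp : Injective (blowUp p ε R t) := by
  intro x y hxy
  by_cases h : ∃ j, x ∈ closedBall (p j) (R j)
  · obtain ⟨j, hx⟩ := h
    have hy := mem_closedBall_of_blowUp_mem hε hεR hR (hxy ▸ (blowUp_mem_closedBall hε hεR hR hx).1)
    rw [blowUp_eq_of_mem hε hεR hR hx, blowUp_eq_of_mem hε hεR hR hy] at hxy
    exact injective_radialIsotopy ((strictMono_blowProfile (hε j) (hεR j)).strictMonoOn _)
      ((hε j).trans (le_blowProfile_of_nonneg (hε j) (hεR j) le_rfl)) hxy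
  · have hy (j : ι) : y ∉ closedBall (p j) (R j) := fun hy =>
      h ⟨j, mem_closedBall_of_blowUp_mem hε hεR hR (hxy ▸ (blowUp_mem_closedBall hε hεR hR hy).1)⟩
    rwa [blowUp_eq_self hε hεR (not_exists.1 h), blowUp_eq_self hε hεR hy] at hxy

lemma mapsTo_blowUp {S : Set E} (hS : ∀ j, closedBall (p j) (R j) ⊆ S) :
    MapsTo (blowUp p ε R t) S S := by
  intro x hx
  by_cases h : ∃ j, x ∈ closedBall (p j) (R j)
  · obtain ⟨j, hj⟩ := h
    exact hS j (blowUp_mem_closedBall hε hεR hR hj).1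
  · rwa [blowUp_eq_self hε hεR (not_exists.1 h)]

lemma mapsTo_blowUp_compl_iUnion_ball :
    MapsTo (blowUp p ε R t) (⋃ i, ball (p i) (ε i))ᶜ (⋃ i, ball (p i) (ε i))ᶜ := by
  intro x hx
  by_cases h : ∃ j, x ∈ closedBall (p j) (R j)
  · obtain ⟨j, hj⟩ := h
    have hxj : ε j ≤ dist x (p j) := not_lt.1 fun h' => hx (mem_iUnion.2 ⟨j, h'⟩)
    obtain ⟨hmem, hdist⟩ := blowUp_mem_closedBall hε hεR hR hj (t := t)
    exact notMem_iUnion_ball_of_mem_closedBall (fun i => (hεR i).le) hR hmem (hxj.trans hdist)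
  · rwa [blowUp_eq_self hε hεR (not_exists.1 h)]

lemma blowUp_one_notMem_iUnion_ball (hx : x ∉ range p) :
    blowUp p ε R 1 x ∉ ⋃ i, ball (p i) (ε i) := by
  by_cases h : ∃ j, x ∈ closedBall (p j) (R j)
  · obtain ⟨j, hj⟩ := h
    have hxp : x ≠ p j := fun h => hx ⟨j, h.symm⟩
    have hφ := le_blowProfile_of_nonneg (hε j) (hεR j) (dist_nonneg (x := x) (y := p j))
    refine notMem_iUnion_ball_of_mem_closedBall (fun i => (hεR i).le) hR
      (blowUp_mem_closedBall hε hεR hR hj).1 ?_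
    rw [blowUp_eq_of_mem hε hεR hR hj, dist_radialIsotopy hxp ((hε j).trans hφ)]
    simpa using hφ
  · rw [blowUp_eq_self hε hεR (not_exists.1 h)]
    simp only [mem_iUnion, not_exists]
    exact fun i hi =>
      h ⟨i, ball_subset_closedBall.trans (closedBall_subset_closedBall (hεR i).le) hi⟩

end BlowUp

section Compress

variable {E : Type*} [NormedAddCommGroup E] [NormedSpace ℝ E] {q x : E} {b ρ : ℝ} {t : I}

lemma injective_radialIsotopy_compressProfile (hρ : 0 < ρ) (hbρ : b < ρ) :
    Injective (radialIsotopy q (compressProfile b ρ) t) :=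
  injective_radialIsotopy (strictMonoOn_compressProfile hbρ hρ)
    (compressProfile_nonneg hbρ hρ le_rfl)

lemma radialIsotopy_compressProfile_eq_self (hbρ : b < ρ) (hx : x ∈ closedBall q b) :
    radialIsotopy q (compressProfile b ρ) t x = x :=
  radialIsotopy_eq_self (compressProfile_eq_self hbρ ⟨dist_nonneg, hx⟩)

lemma dist_radialIsotopy_compressProfile_le (hρ : 0 < ρ) (hbρ : b < ρ) :
    dist (radialIsotopy q (compressProfile b ρ) t x) q ≤ dist x q := by
  obtain rfl | hx := eq_or_ne x q
  · simp
  rw [dist_radialIsotopy hx (compressProfile_nonneg hbρ hρ dist_nonneg)]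
  have : compressProfile b ρ (dist x q) ≤ dist x q := compressProfile_le
  nlinarith [t.2.1, t.2.2]

lemma dist_radialIsotopy_compressProfile_one_lt (hρ : 0 < ρ) (hbρ : b < ρ) :
    dist (radialIsotopy q (compressProfile b ρ) 1 x) q < ρ := by
  obtain rfl | hx := eq_or_ne x q
  · simpa using hρ
  rw [dist_radialIsotopy hx (compressProfile_nonneg hbρ hρ dist_nonneg)]
  simpa using compressProfile_lt hbρ hρ dist_nonneg

lemma continuous_radialIsotopy_compressProfile (hb : 0 < b) (hbρ : b < ρ) :
    Continuous (uncurry (radialIsotopy q (compressProfile b ρ))) := by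
  refine continuous_iff_continuousAt.2 fun ⟨t, x⟩ => ?_
  obtain rfl | hx := eq_or_ne x q
  · exact continuousAt_radialIsotopy_center hb fun r hr => compressProfile_eq_self hbρ hr
  · exact continuousAt_radialIsotopy hx (continuousAt_compressProfile hbρ dist_nonneg)

end Compress

lemma exists_radii_of_pairwise_disjoint_closedBall {E ι : Type*} [NormedAddCommGroup E]
    [NormedSpace ℝ E] [ProperSpace E] [Finite ι] {p : ι → E} {ε : ι → ℝ} {q : E} {ρ : ℝ}
    (hρ : 0 < ρ) (hε : ∀ j, 0 ≤ ε j)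
    (hdisj : Pairwise (Disjoint on fun j => closedBall (p j) (ε j)))
    (hsub : ∀ j, closedBall (p j) (ε j) ⊆ ball q ρ) :
    ∃ R : ι → ℝ, (∀ j, ε j < R j) ∧ Pairwise (Disjoint on fun j => closedBall (p j) (R j)) ∧
      ∃ b ∈ Ioo 0 ρ, ∀ j, closedBall (p j) (R j) ⊆ closedBall q b := by
  have hK : IsCompact (⋃ j, closedBall (p j) (ε j)) :=
    isCompact_iUnion fun j => isCompact_closedBall _ _
  obtain ⟨b, hbρ, hKb⟩ := exists_lt_subset_ball hK.isClosed (iUnion_subset hsub)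
  have hsmall : ∀ᶠ δ in 𝓝[>] (0 : ℝ), cthickening δ (⋃ j, closedBall (p j) (ε j)) ⊆ ball q b := by
    obtain ⟨δ₀, hδ₀, h⟩ := hK.exists_cthickening_subset_open isOpen_ball hKb
    filter_upwards [Ioc_mem_nhdsGT hδ₀] with δ hδ using (cthickening_mono hδ.2 _).trans h
  have hsep : ∀ᶠ δ in 𝓝[>] (0 : ℝ), ∀ i j, i ≠ j →
      Disjoint (cthickening δ (closedBall (p i) (ε i)))
        (cthickening δ (closedBall (p j) (ε j))) := by
    refine Filter.eventually_all.2 fun i => Filter.eventually_all.2 fun j => ?_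
    obtain rfl | hij := eq_or_ne i j
    · exact Filter.Eventually.of_forall fun _ h => absurd rfl h
    obtain ⟨δ₀, hδ₀, h⟩ :=
      (hdisj hij).exists_cthickenings (isCompact_closedBall _ _) isClosed_closedBall
    filter_upwards [Ioc_mem_nhdsGT hδ₀] with δ hδ _
    exact h.mono (cthickening_mono hδ.2 _) (cthickening_mono hδ.2 _)
  obtain ⟨δ, hδsmall, hδsep, hδ⟩ := (hsmall.and (hsep.and self_mem_nhdsWithin)).exists
  have hthick (j : ι) : closedBall (p j) (ε j + δ) = cthickening δ (closedBall (p j) (ε j)) := by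
    rw [cthickening_closedBall (le_of_lt hδ) (hε j), add_comm]
  refine ⟨fun j => ε j + δ, fun j => lt_add_of_pos_right _ hδ, fun i j hij => ?_,
    max b (ρ / 2), ⟨by positivity, max_lt hbρ (half_lt_self hρ)⟩, fun j => ?_⟩
  · simpa only [Function.onFun, hthick] using hδsep i j hij
  · rw [hthick]
    exact (cthickening_subset_of_subset δ (subset_iUnion (fun j => closedBall (p j) (ε j)) j)).trans
      (hδsmall.trans
        (ball_subset_closedBall.trans (closedBall_subset_closedBall (le_max_left _ _))))

theorem Conf.nonempty_homotopyEquiv_closedBall_diff_iUnion_ball {E ι : Type*}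
    [NormedAddCommGroup E] [NormedSpace ℝ E] [ProperSpace E] [Fintype ι] (k : ℕ) {p : ι → E}
    {ε : ι → ℝ} {q : E} {ρ : ℝ} (hρ : 0 < ρ) (hε : ∀ j, 0 < ε j)
    (hdisj : Pairwise (Disjoint on fun j => closedBall (p j) (ε j)))
    (hsub : ∀ j, closedBall (p j) (ε j) ⊆ ball q ρ) :
    Nonempty (Conf k ↥(closedBall q ρ \ ⋃ j, ball (p j) (ε j)) ≃ₕ Conf k ↥(range p)ᶜ) := by
  have hε₀ (j : ι) : 0 ≤ ε j := (hε j).le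
  obtain ⟨R, hεR, hR, b, ⟨hb, hbρ⟩, hRb⟩ :=
    exists_radii_of_pairwise_disjoint_closedBall hρ hε₀ hdisj hsub
  set C := radialIsotopy q (compressProfile b ρ)
  set B := blowUp p ε R
  have hC (t : I) : Injective (C t) := injective_radialIsotopy_compressProfile hρ hbρ
  have hB (t : I) : Injective (B t) := injective_blowUp hε₀ hεR hR
  have hfix {f : E → E} {s : Set E} (hf : Injective f) (hs : ∀ x ∈ s, f x = x) :
      MapsTo f sᶜ sᶜ :=
    ((surjOn_id s).congr fun x hx => (hs x hx).symm).mapsTo_compl hf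
  have hCholes (t : I) : MapsTo (C t) (⋃ j, ball (p j) (ε j))ᶜ (⋃ j, ball (p j) (ε j))ᶜ := by
    refine hfix (hC t) fun x hx => radialIsotopy_compressProfile_eq_self hbρ ?_
    obtain ⟨j, hj⟩ := mem_iUnion.1 hx
    exact hRb j (ball_subset_closedBall.trans (closedBall_subset_closedBall (hεR j).le) hj)
  refine Conf.nonempty_homotopyEquiv_of_deformation (fun t x => C t (B t x))
    (fun z hz => ?_) (fun t => ((hC t).comp (hB t)).injOn) (fun t => ?_) (fun t x hx => ?_)
    (fun x hx ⟨j, hj⟩ => hx.2 (mem_iUnion.2 ⟨j, hj ▸ mem_ball_self (hε j)⟩))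
    (fun x _ => by simp [C, B]) (fun x hx => ?_)
  · exact ((continuous_radialIsotopy_compressProfile hb hbρ).continuousAt.comp
      (f := fun z : I × E => (z.1, B z.1 z.2))
      (continuousAt_fst.prodMk (continuousAt_blowUp hz.2))).continuousWithinAt
  · have hcenters (f : E → E) (hf : ∀ x ∈ closedBall q b, f x = x) (x : E) (hx : x ∈ range p) :
        f x = x := by
      obtain ⟨j, rfl⟩ := hx
      exact hf _ (hRb j (mem_closedBall_self ((hε₀ j).trans (hεR j).le)))
    exact (hfix (hC t) (hcenters _ fun x => radialIsotopy_compressProfile_eq_self hbρ)).comp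
      (hfix (hB t) fun x ⟨j, hj⟩ => hj ▸ blowUp_center hε₀ hεR hR)
  · refine ⟨mem_closedBall.2 ((dist_radialIsotopy_compressProfile_le hρ hbρ).trans ?_),
      hCholes t (mapsTo_blowUp_compl_iUnion_ball hε₀ hεR hR hx.2)⟩
    exact mem_closedBall.1 (mapsTo_blowUp hε₀ hεR hR
      (fun j => (hRb j).trans (closedBall_subset_closedBall hbρ.le)) hx.1)
  · exact ⟨mem_closedBall.2 (dist_radialIsotopy_compressProfile_one_lt hρ hbρ).le,
      hCholes 1 (blowUp_one_notMem_iUnion_ball hε₀ hεR hR hx)⟩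

lemma openCube_eq_ball {N : ℕ} {c : Fin N → ℝ} {r : ℝ} (hr : 0 < r) :
    openCube N c r = ball c r := by
  ext x
  simp [openCube, dist_pi_lt_iff hr, Real.dist_eq]

lemma unitCube_eq_closedBall (N : ℕ) : unitCube N = closedBall (fun _ => 1 / 2) (1 / 2) := by
  ext x
  simp only [unitCube, mem_ofPred_eq, mem_closedBall, dist_pi_le_iff one_half_pos.le, Real.dist_eq,
    mem_Icc, abs_sub_le_iff]
  exact forall_congr' fun i => by constructor <;> intro h <;> constructor <;> linarith [h.1, h.2]

lemma openUnitCube_eq_ball (N : ℕ) : openUnitCube N = ball (fun _ => 1 / 2) (1 / 2) := by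
  ext x
  simp only [openUnitCube, mem_ofPred_eq, mem_ball, dist_pi_lt_iff one_half_pos, Real.dist_eq,
    mem_Ioo, abs_sub_lt_iff]
  exact forall_congr' fun i => by constructor <;> intro h <;> constructor <;> linarith [h.1, h.2]

theorem conf_unitCube_minus_cubes_homotopyEquiv_general
    (N k m : ℕ)
    (p : Fin (m + 1) → (Fin N → ℝ)) (ε : Fin (m + 1) → ℝ) (hε : ∀ j, 0 < ε j)
    (hdisj : ∀ j j' : Fin (m + 1), j ≠ j' →
      Disjoint (closure (openCube N (p j) (ε j))) (closure (openCube N (p j') (ε j'))))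
    (hsub : ∀ j, closure (openCube N (p j) (ε j)) ⊆ openUnitCube N) :
    Nonempty
      (ContinuousMap.HomotopyEquiv
        (Conf k ↥(unitCube N \ ⋃ j, openCube N (p j) (ε j)))
        (Conf k ↥((Set.range p)ᶜ))) := by
  have hcube (j : Fin (m + 1)) : openCube N (p j) (ε j) = ball (p j) (ε j) :=
    openCube_eq_ball (hε j)
  have hclosure (j : Fin (m + 1)) : closure (openCube N (p j) (ε j)) = closedBall (p j) (ε j) := by
    rw [hcube, closure_ball _ (hε j).ne']
  rw [unitCube_eq_closedBall, iUnion_congr hcube]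
  refine Conf.nonempty_homotopyEquiv_closedBall_diff_iUnion_ball k one_half_pos hε
    (fun i j hij => ?_) fun j => ?_
  · simpa only [Function.onFun, ← hclosure] using hdisj i j hij
  · simpa only [← hclosure, ← openUnitCube_eq_ball] using hsub j

/-- Let `B_0, …, B_m` be open cubes in `ℝ^N` with centers `p_0, …, p_m` whose
closures are pairwise disjoint and contained in the open unit cube.  Then the
ordered configuration space of `k` points in `[0,1]^N \ (B_0 ∪ … ∪ B_m)` is
homotopy equivalent to the ordered configuration space of `k` points in
`ℝ^N \ {p_0, …, p_m}`. -/
theorem conf_unitCube_minus_cubes_homotopyEquiv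
    (N k m : ℕ) (hN : 1 ≤ N) (hk : 1 ≤ k)
    (p : Fin (m + 1) → (Fin N → ℝ)) (ε : Fin (m + 1) → ℝ) (hε : ∀ j, 0 < ε j)
    (hdisj : ∀ j j' : Fin (m + 1), j ≠ j' →
      Disjoint (closure (openCube N (p j) (ε j))) (closure (openCube N (p j') (ε j'))))
    (hsub : ∀ j, closure (openCube N (p j) (ε j)) ⊆ openUnitCube N) :
    Nonempty
      (ContinuousMap.HomotopyEquiv
        (Conf k ↥(unitCube N \ ⋃ j, openCube N (p j) (ε j)))
        (Conf k ↥((Set.range p)ᶜ))) :=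
  conf_unitCube_minus_cubes_homotopyEquiv_general N k m p ε hε hdisj hsub
end

section
/- Let N ≥ 1 and k ≥ 1 be natural numbers, let S ⊆ ℝ^N be a finite set, and let M = ℝ^N \ S. Then the map π : Conf(k, M) → M which sends an injective tuple (x_1, …, x_k) to its first point x_1 is a Serre fibration, and for every x ∈ M the fiber π^{-1}(x) is homeomorphic to the ordered configuration space Conf(k−1, M \ {x}). -/
/-- A map `p : E → B` is a Serre fibration if it has the homotopy lifting
property with respect to the closed unit disks `D^k ⊆ ℝ^k` for all `k ≥ 0`. -/
def IsSerreFibration {E B : Type*} [TopologicalSpace E] [TopologicalSpace B]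
    (p : E → B) : Prop :=
  ∀ (k : ℕ) (f : (Metric.closedBall (0 : EuclideanSpace ℝ (Fin k)) 1) → E)
    (H : (Metric.closedBall (0 : EuclideanSpace ℝ (Fin k)) 1) × unitInterval → B),
    Continuous f → Continuous H → (∀ d, p (f d) = H (d, 0)) →
    ∃ h : (Metric.closedBall (0 : EuclideanSpace ℝ (Fin k)) 1) × unitInterval → E,
      Continuous h ∧ (∀ d, h (d, 0) = f d) ∧ ∀ x, p (h x) = H x


noncomputable def pushMap {N : ℕ} (r : ℝ) (a b z : (Fin N → ℝ)) : (Fin N → ℝ) :=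
  z + (max 0 (1 - ‖z - a‖ / r)) • (b - a)

lemma pushMap_far {N : ℕ} {r : ℝ} (hr : 0 < r) {a z : Fin N → ℝ} (b : Fin N → ℝ)
    (h : r ≤ ‖z - a‖) : pushMap r a b z = z := by
  have h1 : 1 - ‖z - a‖ / r ≤ 0 := by
    have h2 : 1 ≤ ‖z - a‖ / r := (one_le_div hr).mpr h
    linarith
  simp [pushMap, max_eq_left h1]

lemma pushMap_inj {N : ℕ} {r : ℝ} (hr : 0 < r) {a b : Fin N → ℝ} (hb : ‖b - a‖ < r) :
    Function.Injective (pushMap r a b) := by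
  intro z z' h
  by_contra hne
  have hzz : 0 < ‖z - z'‖ := by
    simpa [norm_sub_pos_iff] using sub_ne_zero_of_ne hne
  set c : (Fin N → ℝ) → ℝ := fun w => max 0 (1 - ‖w - a‖ / r) with hc
  have key : z - z' = (c z' - c z) • (b - a) := by
    have : z + c z • (b - a) = z' + c z' • (b - a) := h
    rw [sub_smul]
    abel_nf
    linear_combination (norm := module) this
  have hlip : |c z' - c z| ≤ ‖z - z'‖ / r := by
    have h1 : |c z' - c z| ≤ |(1 - ‖z' - a‖ / r) - (1 - ‖z - a‖ / r)| := by
      rw [hc]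
      simp only [max_comm (0:ℝ)]
      exact abs_max_sub_max_le_abs _ _ _
    have h2 : |(1 - ‖z' - a‖ / r) - (1 - ‖z - a‖ / r)| = |‖z - a‖ - ‖z' - a‖| / r := by
      rw [show (1 - ‖z' - a‖ / r) - (1 - ‖z - a‖ / r) = (‖z - a‖ - ‖z' - a‖) / r by ring]
      rw [abs_div, abs_of_pos hr]
    have h3 : |‖z - a‖ - ‖z' - a‖| ≤ ‖z - z'‖ := by
      have := abs_norm_sub_norm_le (z - a) (z' - a)
      simpa using this
    rw [h2] at h1
    exact h1.trans (div_le_div_of_nonneg_right h3 hr.le |>.trans_eq rfl)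
  have : ‖z - z'‖ ≤ ‖z - z'‖ / r * ‖b - a‖ := by
    calc ‖z - z'‖ = |c z' - c z| * ‖b - a‖ := by rw [key, norm_smul, Real.norm_eq_abs]
    _ ≤ ‖z - z'‖ / r * ‖b - a‖ :=
        mul_le_mul_of_nonneg_right hlip (norm_nonneg _)
  have hlt : ‖z - z'‖ / r * ‖b - a‖ < ‖z - z'‖ := by
    rw [div_mul_eq_mul_div, div_lt_iff₀ hr]
    have := mul_lt_mul_of_pos_left hb hzz
    linarith
  linarith


lemma pushMap_center {N : ℕ} (r : ℝ) (a b : Fin N → ℝ) : pushMap r a b a = b := by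
  simp [pushMap]

lemma pushMap_id {N : ℕ} (r : ℝ) (a z : Fin N → ℝ) : pushMap r a a z = z := by
  simp [pushMap]

lemma pushMap_cont {N : ℕ} {X : Type*} [TopologicalSpace X] (r : ℝ) {A B Z : X → (Fin N → ℝ)}
    (hA : Continuous A) (hB : Continuous B) (hZ : Continuous Z) :
    Continuous fun x => pushMap r (A x) (B x) (Z x) := by
  unfold pushMap; fun_prop



lemma pushMap_notMem {N : ℕ} {r : ℝ} (hr : 0 < r) {a b : Fin N → ℝ} (hb : ‖b - a‖ < r)
    {S : Set (Fin N → ℝ)} (hsep : ∀ s ∈ S, r ≤ ‖s - a‖) {z : Fin N → ℝ} (hz : z ∉ S) :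
    pushMap r a b z ∉ S := by
  intro hmem
  have h1 : pushMap r a b (pushMap r a b z) = pushMap r a b z :=
    pushMap_far hr b (hsep _ hmem)
  exact hz ((pushMap_inj hr hb h1) ▸ hmem)

noncomputable def projI (m j : ℕ) (t : unitInterval) : unitInterval :=
  ⟨min t.1 ((j : ℝ) / m), ⟨le_min t.2.1 (by positivity), min_le_of_left_le t.2.2⟩⟩

lemma projI_val (m j : ℕ) (t : unitInterval) : (projI m j t).1 = min t.1 ((j:ℝ)/m) := rfl

lemma projI_zero (m j : ℕ) : projI m j 0 = 0 := by
  apply Subtype.ext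
  simp [projI, min_eq_left (by positivity : (0:ℝ) ≤ (j:ℝ)/m)]

lemma projI_zero' (m : ℕ) (t : unitInterval) : projI m 0 t = 0 := by
  apply Subtype.ext
  simp [projI, min_eq_right t.2.1]

lemma projI_self (m : ℕ) (hm : m ≠ 0) (t : unitInterval) : projI m m t = t := by
  apply Subtype.ext
  have : (m : ℝ) / m = 1 := div_self (by exact_mod_cast hm)
  simp [projI, this, min_eq_left t.2.2]

lemma projI_dist (m j : ℕ) (hm : m ≠ 0) (t : unitInterval) :
    |(projI m (j+1) t).1 - (projI m j t).1| ≤ 1 / m := by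
  have hm' : (0:ℝ) < m := by positivity
  have hle : (j:ℝ)/m ≤ ((j:ℝ)+1)/m := by gcongr; linarith
  have key : ((j+1:ℕ):ℝ)/m = (j:ℝ)/m + 1/m := by push_cast; ring
  rw [projI_val, projI_val, key]
  rcases le_or_gt t.1 ((j:ℝ)/m) with h | h
  · rw [min_eq_left h, min_eq_left (h.trans (by linarith [one_div_pos.mpr hm'] : (j:ℝ)/m ≤ (j:ℝ)/m + 1/m))]
    simp [one_div_nonneg.mpr hm'.le]
  · rw [min_eq_right h.le]
    have h1 : min t.1 ((j:ℝ)/m + 1/m) ≤ (j:ℝ)/m + 1/m := min_le_right _ _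
    have h2 : (j:ℝ)/m ≤ min t.1 ((j:ℝ)/m + 1/m) := le_min h.le (by linarith [one_div_pos.mpr hm'])
    rw [abs_le]
    constructor <;> [linarith [one_div_pos.mpr hm']; linarith]

lemma projI_continuous (m j : ℕ) : Continuous (projI m j) :=
  (continuous_subtype_val.min continuous_const).subtype_mk _


noncomputable def liftFun {N k : ℕ} {D : Type*} (m : ℕ) (r : ℝ)
    (H : D × unitInterval → (Fin N → ℝ)) (f0 : D → Fin k → (Fin N → ℝ)) :
    ℕ → D × unitInterval → Fin k → (Fin N → ℝ)
  | 0 => fun x => f0 x.1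
  | j+1 => fun x i =>
      pushMap r (H (x.1, projI m j x.2)) (H (x.1, projI m (j+1) x.2))
        (liftFun m r H f0 j x i)

lemma liftFun_spec {N k : ℕ} {D : Type*} [TopologicalSpace D] (S : Set (Fin N → ℝ))
    (m : ℕ) (hm : m ≠ 0) (r : ℝ) (hr : 0 < r) (i0 : Fin k)
    (H : D × unitInterval → (Fin N → ℝ)) (hH : Continuous H)
    (hsep : ∀ x, ∀ s ∈ S, r ≤ ‖s - H x‖)
    (hstep : ∀ (d : D) (t t' : unitInterval), |t.1 - t'.1| ≤ 1/m → ‖H (d,t) - H (d,t')‖ < r)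
    (f0 : D → Fin k → (Fin N → ℝ)) (hf0c : Continuous f0)
    (hf0S : ∀ d i, f0 d i ∉ S) (hf0inj : ∀ d, Function.Injective (f0 d))
    (hf0H : ∀ d, f0 d i0 = H (d, 0)) (j : ℕ) :
    Continuous (liftFun m r H f0 j) ∧
    (∀ x i, liftFun m r H f0 j x i ∉ S) ∧
    (∀ x : D × unitInterval, Function.Injective (liftFun m r H f0 j x)) ∧
    (∀ x : D × unitInterval, liftFun m r H f0 j x i0 = H (x.1, projI m j x.2)) ∧
    (∀ d : D, liftFun m r H f0 j (d, 0) = f0 d) := by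
  induction j with
  | zero =>
    refine ⟨hf0c.comp continuous_fst, fun x i => hf0S _ _, fun x => hf0inj _, fun x => ?_, fun d => rfl⟩
    rw [projI_zero']
    exact hf0H x.1
  | succ j ih =>
    obtain ⟨ihc, ihS, ihinj, ihfst, ihzero⟩ := ih
    have hmove : ∀ x : D × unitInterval,
        ‖H (x.1, projI m (j+1) x.2) - H (x.1, projI m j x.2)‖ < r := by
      intro x
      have := projI_dist m j hm x.2
      have habs : |(projI m (j+1) x.2).1 - (projI m j x.2).1| ≤ 1/m := this
      exact hstep x.1 _ _ habs
    refine ⟨?_, ?_, ?_, ?_, ?_⟩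
    · apply continuous_pi
      intro i
      exact pushMap_cont r
        (hH.comp (continuous_fst.prodMk ((projI_continuous m j).comp continuous_snd)))
        (hH.comp (continuous_fst.prodMk ((projI_continuous m (j+1)).comp continuous_snd)))
        ((continuous_apply i).comp ihc)
    · intro x i
      exact pushMap_notMem hr (hmove x) (fun s hs => hsep (x.1, projI m j x.2) s hs) (ihS x i)
    · intro x i i' hii
      exact ihinj x (pushMap_inj hr (hmove x) hii)
    · intro x
      show pushMap r _ _ (liftFun m r H f0 j x i0) = _
      rw [ihfst x]
      exact pushMap_center _ _ _
    · intro d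
      funext i
      show pushMap r (H (d, projI m j 0)) (H (d, projI m (j+1) 0)) (liftFun m r H f0 j (d,0) i) = _
      rw [projI_zero, projI_zero, pushMap_id, ihzero d]



section FiberHomeo
variable {N k : ℕ}

private def eIdx (hk : 1 ≤ k) (i : Fin (k-1)) : Fin k := ⟨i.1 + 1, by omega⟩

lemma eIdx_ne (hk : 1 ≤ k) (i : Fin (k-1)) : eIdx hk i ≠ ⟨0, hk⟩ := by
  intro h
  have := congrArg Fin.val h
  simp [eIdx] at this

noncomputable def fiberHomeo (hk : 1 ≤ k) (S : Set (Fin N → ℝ)) (x : ↥(Sᶜ)) :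
    ↥((fun c : Conf k ↥(Sᶜ) => c.val ⟨0, hk⟩) ⁻¹' {x}) ≃ₜ
      Conf (k - 1) ↥(Sᶜ \ {(x : Fin N → ℝ)}) where
  toFun c := ⟨fun i => ⟨(c.1.val (eIdx hk i) : Fin N → ℝ),
      ⟨(c.1.val (eIdx hk i)).2, by
        intro hEq
        have hx : c.1.val (eIdx hk i) = x := Subtype.ext hEq
        have h0 : c.1.val ⟨0, hk⟩ = x := c.2
        exact eIdx_ne hk i (c.1.2 (hx.trans h0.symm))⟩⟩,
    by
      intro i i' hii
      dsimp only at hii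
      have hval := congrArg Subtype.val hii
      have h1 : c.1.val (eIdx hk i) = c.1.val (eIdx hk i') := Subtype.ext hval
      have h2 := c.1.2 h1
      have := congrArg Fin.val h2
      simp [eIdx] at this
      exact Fin.ext this⟩
  invFun g := ⟨⟨fun j => if h0 : (j : ℕ) = 0 then x
        else ⟨(g.val ⟨j.1 - 1, by omega⟩ : Fin N → ℝ), (g.val ⟨j.1 - 1, by omega⟩).2.1⟩,
      by
        intro j j' hjj
        dsimp only at hjj
        by_cases hj : (j : ℕ) = 0 <;> by_cases hj' : (j' : ℕ) = 0
        · exact Fin.ext (hj.trans hj'.symm)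
        · rw [dif_pos hj, dif_neg hj'] at hjj
          exact absurd (congrArg Subtype.val hjj).symm (g.val ⟨j'.1 - 1, by omega⟩).2.2
        · rw [dif_neg hj, dif_pos hj'] at hjj
          exact absurd (congrArg Subtype.val hjj) (g.val ⟨j.1 - 1, by omega⟩).2.2
        · rw [dif_neg hj, dif_neg hj'] at hjj
          have hval := congrArg Subtype.val hjj
          have h1 : g.val ⟨j.1 - 1, by omega⟩ = g.val ⟨j'.1 - 1, by omega⟩ :=
            Subtype.ext hval
          have h2 := g.2 h1
          have := congrArg Fin.val h2
          simp at this
          exact Fin.ext (by omega)⟩,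
    by
      show (fun c : Conf k ↥(Sᶜ) => c.val ⟨0, hk⟩) _ ∈ ({x} : Set ↥(Sᶜ))
      simp⟩
  left_inv c := by
    apply Subtype.ext
    apply Subtype.ext
    funext j
    dsimp only
    by_cases hj : (j : ℕ) = 0
    · rw [dif_pos hj]
      have hj' : j = ⟨0, hk⟩ := Fin.ext hj
      rw [hj']
      exact c.2.symm
    · rw [dif_neg hj]
      apply Subtype.ext
      show (c.1.val (eIdx hk ⟨j.1 - 1, _⟩) : Fin N → ℝ) = _
      congr 1
      exact congrArg c.1.val (Fin.ext (by simp [eIdx]; omega))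
  right_inv g := by
    apply Subtype.ext
    funext i
    apply Subtype.ext
    dsimp only
    rw [dif_neg (show ¬(((eIdx hk i : Fin k)) : ℕ) = 0 from by simp [eIdx])]
    exact congrArg (fun j => (g.val j : Fin N → ℝ)) (Fin.ext (by simp [eIdx]))
  continuous_toFun := by
    apply Continuous.subtype_mk
    apply continuous_pi
    intro i
    apply Continuous.subtype_mk
    exact continuous_subtype_val.comp (((continuous_apply (eIdx hk i)).comp
      (continuous_subtype_val.comp continuous_subtype_val)))
  continuous_invFun := by
    apply Continuous.subtype_mk
    apply Continuous.subtype_mk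
    apply continuous_pi
    intro j
    by_cases hj : (j : ℕ) = 0
    · simp only [dif_pos hj]
      exact continuous_const
    · simp only [dif_neg hj]
      apply Continuous.subtype_mk
      exact continuous_subtype_val.comp ((continuous_apply _).comp continuous_subtype_val)
end FiberHomeo






lemma serre_lift {N k : ℕ} (hk : 1 ≤ k) (S : Set (Fin N → ℝ)) (hS : S.Finite)
    {D : Type*} [MetricSpace D] [CompactSpace D] [Nonempty D]
    (f : D → Conf k ↥(Sᶜ)) (H : D × unitInterval → ↥(Sᶜ))
    (hf : Continuous f) (hH : Continuous H)
    (hcomp : ∀ d, (f d).val ⟨0, hk⟩ = H (d, 0)) :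
    ∃ h : D × unitInterval → Conf k ↥(Sᶜ),
      Continuous h ∧ (∀ d, h (d, 0) = f d) ∧ ∀ x, (h x).val ⟨0, hk⟩ = H x := by
  set HV : D × unitInterval → (Fin N → ℝ) := fun x => ((H x : ↥(Sᶜ)) : Fin N → ℝ) with hHV
  have hHVc : Continuous HV := continuous_subtype_val.comp hH
  obtain ⟨δ, hδpos, hsep⟩ : ∃ δ > 0, ∀ x, ∀ s ∈ S, δ ≤ ‖s - HV x‖ := by
    rcases S.eq_empty_or_nonempty with hSe | hSne
    · exact ⟨1, one_pos, fun x s hs => absurd (hSe ▸ hs) (Set.notMem_empty s)⟩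
    · have hScl : IsClosed S := hS.isClosed
      have hgc : Continuous fun x : D × unitInterval => Metric.infDist (HV x) S :=
        (Metric.continuous_infDist_pt S).comp hHVc
      have hne : (Set.univ : Set (D × unitInterval)).Nonempty := Set.univ_nonempty
      obtain ⟨x₀, -, hx₀⟩ := isCompact_univ.exists_isMinOn hne hgc.continuousOn
      refine ⟨Metric.infDist (HV x₀) S, ?_, ?_⟩
      · exact (hScl.notMem_iff_infDist_pos hSne).mp (H x₀).2
      · intro x s hs
        calc Metric.infDist (HV x₀) S ≤ Metric.infDist (HV x) S := hx₀ (Set.mem_univ x)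
          _ ≤ dist (HV x) s := Metric.infDist_le_dist_of_mem hs
          _ = ‖s - HV x‖ := by rw [dist_eq_norm, norm_sub_rev]
  have hUC : UniformContinuous HV := CompactSpace.uniformContinuous_of_continuous hHVc
  obtain ⟨ε, hε, hUC'⟩ := Metric.uniformContinuous_iff.mp hUC δ hδpos
  obtain ⟨n, hn⟩ := exists_nat_one_div_lt hε
  set m := n + 1 with hm
  have hm0 : (m : ℕ) ≠ 0 := Nat.succ_ne_zero n
  have hstep : ∀ (d : D) (t t' : unitInterval), |t.1 - t'.1| ≤ 1/m →
      ‖HV (d,t) - HV (d,t')‖ < δ := by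
    intro d t t' ht
    have h1 : dist ((d,t) : D × unitInterval) (d,t') < ε := by
      rw [Prod.dist_eq]
      apply max_lt (by simpa using hε)
      have h2 : dist t t' = |t.1 - t'.1| := Subtype.dist_eq t t' |>.trans (Real.dist_eq _ _)
      rw [h2]
      calc |t.1 - t'.1| ≤ 1/m := ht
        _ < ε := by exact_mod_cast hn
    have h3 := hUC' h1
    rwa [dist_eq_norm] at h3
  set f0 : D → Fin k → (Fin N → ℝ) := fun d i => ((f d).val i : Fin N → ℝ) with hf0
  have hf0c : Continuous f0 := by
    apply continuous_pi
    intro i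
    exact continuous_subtype_val.comp ((continuous_apply i).comp (continuous_subtype_val.comp hf))
  have hf0S : ∀ d i, f0 d i ∉ S := fun d i => ((f d).val i).2
  have hf0inj : ∀ d, Function.Injective (f0 d) := fun d =>
    Subtype.val_injective.comp (f d).2
  have hf0H : ∀ d, f0 d ⟨0, hk⟩ = HV (d, 0) := fun d =>
    congrArg Subtype.val (hcomp d)
  obtain ⟨hc, hSmem, hinj, hfst, hzero⟩ :=
    liftFun_spec S m hm0 δ hδpos ⟨0, hk⟩ HV hHVc hsep hstep f0 hf0c hf0S hf0inj hf0H m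
  set L := liftFun m δ HV f0 m with hL
  refine ⟨fun x => ⟨fun i => ⟨L x i, hSmem x i⟩,
      fun i i' hii => hinj x (congrArg Subtype.val hii)⟩, ?_, ?_, ?_⟩
  · exact ((continuous_pi fun i => ((continuous_apply i).comp hc).subtype_mk _).subtype_mk _)
  · intro d
    apply Subtype.ext
    funext i
    apply Subtype.ext
    show L (d, 0) i = f0 d i
    rw [hzero d]
  · intro x
    apply Subtype.ext
    show L x ⟨0, hk⟩ = HV x
    rw [hfst x, projI_self m hm0]

theorem serrePart (N k : ℕ) (hk : 1 ≤ k) (S : Set (Fin N → ℝ)) (hS : S.Finite) :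
    IsSerreFibration (fun c : Conf k ↥(Sᶜ) => c.val ⟨0, hk⟩) := by
  intro q f H hf hH hcomp
  haveI : CompactSpace ↥(Metric.closedBall (0 : EuclideanSpace ℝ (Fin q)) 1) :=
    isCompact_iff_compactSpace.mp (isCompact_closedBall _ _)
  haveI : Nonempty ↥(Metric.closedBall (0 : EuclideanSpace ℝ (Fin q)) 1) :=
    ⟨⟨0, Metric.mem_closedBall_self (by norm_num)⟩⟩
  obtain ⟨h, h1, h2, h3⟩ := serre_lift hk S hS f H hf hH (fun d => hcomp d)
  exact ⟨h, h1, h2, fun x => h3 x⟩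

/-- For a finite set `S ⊆ ℝ^N` and `M = ℝ^N \ S`, the map
`π : Conf(k, M) → M` sending an injective tuple to its first point is
(continuous and) a Serre fibration, and its fiber over `x ∈ M` is homeomorphic
to `Conf(k - 1, M \ {x})`. -/
theorem conf_firstPoint_isSerreFibration
    (N k : ℕ) (hN : 1 ≤ N) (hk : 1 ≤ k)
    (S : Set (Fin N → ℝ)) (hS : S.Finite) :
    Continuous (fun c : Conf k ↥(Sᶜ) => c.val ⟨0, hk⟩) ∧
    IsSerreFibration (fun c : Conf k ↥(Sᶜ) => c.val ⟨0, hk⟩) ∧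
    ∀ x : ↥(Sᶜ),
      Nonempty
        (↥((fun c : Conf k ↥(Sᶜ) => c.val ⟨0, hk⟩) ⁻¹' {x}) ≃ₜ
          Conf (k - 1) ↥(Sᶜ \ {(x : Fin N → ℝ)})) := by
  refine ⟨(continuous_apply (⟨0, hk⟩ : Fin k)).comp continuous_subtype_val,
    serrePart N k hk S hS, fun x => ⟨fiberHomeo hk S x⟩⟩
end
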